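/- For any two simple connected graphs G and H, the distinguishing number of the co-normal product satisfies D(G ⋆ H) ≤ min{D(G)·|V(H)|, |V(G)|·D(H)}. -/

import Mathlib

open SimpleGraph

/-- The co-normal product of two simple graphs. -/
def conormalProd {α β : Type*} (G : SimpleGraph α) (H : SimpleGraph β) :
    SimpleGraph (α × β) where
  Adj x y := G.Adj x.1 y.1 ∨ H.Adj x.2 y.2
  symm := ⟨fun x y h => h.imp (fun a => a.symm) (fun a => a.symm)⟩
  loopless := ⟨fun x h => h.elim (G.loopless.irrefl x.1) (H.loopless.irrefl x.2)⟩

/-- The distinguishing number of a graph. -/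
noncomputable def distinguishingNumber {α : Type*} (G : SimpleGraph α) : ℕ :=
  sInf {d | ∃ c : α → Fin d,
    ∀ φ : G ≃g G, (∀ v, c (φ v) = c v) → φ = SimpleGraph.Iso.refl}

/-- The distinguishing index of a graph. -/
noncomputable def distinguishingIndex {α : Type*} (G : SimpleGraph α) : ℕ :=
  sInf {d | ∃ c : G.edgeSet → Fin d,
    ∀ φ : G ≃g G, (∀ e, c (φ.mapEdgeSet e) = c e) → φ = SimpleGraph.Iso.refl}

/-- A dominating vertex: adjacent to all other vertices. -/
def IsDominatingVertex {α : Type*} (G : SimpleGraph α) (v : α) : Prop :=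
  ∀ w, w ≠ v → G.Adj v w

/-- Two vertices are false twins if they are distinct and have equal open neighborhoods. -/
def FalseTwins {α : Type*} (G : SimpleGraph α) (u v : α) : Prop :=
  u ≠ v ∧ G.neighborSet u = G.neighborSet v

/-- A graph is rigid if its only automorphism is the identity. -/
def GraphRigid {α : Type*} (G : SimpleGraph α) : Prop :=
  ∀ φ : G ≃g G, φ = SimpleGraph.Iso.refl

/-
An automorphism of `G ⋆ H` that preserves the second coordinate maps each fibre `α × {v}`
onto itself, and since `H` has no loops, adjacency inside such a fibre is adjacency in `G`; so
it restricts to an automorphism of `G` on every fibre. Labeling `(u, v)` by the pair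
(distinguishing label of `u`, `v`) therefore forces the second coordinate to be fixed and then
each fibre automorphism to be trivial, giving `D(G ⋆ H) ≤ D(G) · |V(H)|`. The other bound follows
by the symmetry `G ⋆ H ≅ H ⋆ G`.
-/

section DistinguishingLabeling

variable {α α' L : Type*} {G : SimpleGraph α} {G' : SimpleGraph α'}

def IsDistinguishingLabeling (G : SimpleGraph α) (c : α → L) : Prop :=
  ∀ φ : G ≃g G, (∀ v, c (φ v) = c v) → φ = Iso.refl

lemma IsDistinguishingLabeling.comp_iso {c : α' → L} (hc : IsDistinguishingLabeling G' c)
    (e : G ≃g G') : IsDistinguishingLabeling G (c ∘ e) := by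
  intro φ hφ
  have hψ : (e.symm.trans (φ.trans e)) = Iso.refl :=
    hc _ fun w => by simpa using hφ (e.symm w)
  ext v
  simpa using congrArg (· (e v)) hψ

lemma distinguishingNumber_le_card_of_isDistinguishingLabeling [Fintype L] {c : α → L}
    (hc : IsDistinguishingLabeling G c) : distinguishingNumber G ≤ Fintype.card L :=
  Nat.sInf_le ⟨Fintype.equivFin L ∘ c,
    fun φ h => hc φ fun v => (Fintype.equivFin L).injective (h v)⟩

lemma exists_isDistinguishingLabeling_fin_distinguishingNumber [Finite α]
    (G : SimpleGraph α) :
    ∃ c : α → Fin (distinguishingNumber G), IsDistinguishingLabeling G c := by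
  have hcard : IsDistinguishingLabeling G (Finite.equivFin α) := fun φ h => by
    ext v
    exact (Finite.equivFin α).injective (h v)
  exact Nat.sInf_mem (s := {d | ∃ c : α → Fin d, IsDistinguishingLabeling G c}) ⟨_, _, hcard⟩

lemma distinguishingNumber_le_of_iso [Finite α'] (e : G ≃g G') :
    distinguishingNumber G ≤ distinguishingNumber G' := by
  obtain ⟨c, hc⟩ := exists_isDistinguishingLabeling_fin_distinguishingNumber G'
  simpa using distinguishingNumber_le_card_of_isDistinguishingLabeling (hc.comp_iso e)

end DistinguishingLabeling

section ConormalProd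

variable {α β : Type*} (G : SimpleGraph α) (H : SimpleGraph β)

@[simp]
lemma conormalProd_adj {x y : α × β} :
    (conormalProd G H).Adj x y ↔ G.Adj x.1 y.1 ∨ H.Adj x.2 y.2 :=
  Iff.rfl

def conormalProdComm : conormalProd G H ≃g conormalProd H G where
  toEquiv := Equiv.prodComm α β
  map_rel_iff' := Or.comm

variable {G H}

def fibreAut (φ : conormalProd G H ≃g conormalProd G H) (hφ : ∀ x, (φ x).2 = x.2) (v : β) :
    G ≃g G where
  toFun u := (φ (u, v)).1
  invFun u := (φ.symm (u, v)).1
  left_inv u := by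
    have : φ (u, v) = ((φ (u, v)).1, v) := Prod.ext rfl (hφ _)
    show (φ.symm ((φ (u, v)).1, v)).1 = u
    rw [← this, φ.symm_apply_apply]
  right_inv u := by
    have hsnd : (φ.symm (u, v)).2 = v := by simpa using (hφ (φ.symm (u, v))).symm
    have : φ.symm (u, v) = ((φ.symm (u, v)).1, v) := Prod.ext rfl hsnd
    show (φ ((φ.symm (u, v)).1, v)).1 = u
    rw [← this, φ.apply_symm_apply]
  map_rel_iff' {a b} := by
    have hfibre : ∀ u, φ (u, v) = ((φ (u, v)).1, v) := fun u => Prod.ext rfl (hφ _)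
    have := φ.map_adj_iff (v := (a, v)) (w := (b, v))
    rw [hfibre a, hfibre b] at this
    simpa using this

@[simp]
lemma fibreAut_apply (φ : conormalProd G H ≃g conormalProd G H) (hφ : ∀ x, (φ x).2 = x.2)
    (v : β) (u : α) : fibreAut φ hφ v u = (φ (u, v)).1 :=
  rfl

variable (G H)

lemma distinguishingNumber_conormalProd_le_mul_card [Finite α] [Fintype β] :
    distinguishingNumber (conormalProd G H) ≤ distinguishingNumber G * Fintype.card β := by
  obtain ⟨c, hc⟩ := exists_isDistinguishingLabeling_fin_distinguishingNumber G
  have hlabel : IsDistinguishingLabeling (conormalProd G H) fun x => (c x.1, x.2) := by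
    intro φ h
    have hsnd : ∀ x, (φ x).2 = x.2 := fun x => (Prod.ext_iff.mp (h x)).2
    have hfst : ∀ v, fibreAut φ hsnd v = Iso.refl :=
      fun v => hc _ fun u => (Prod.ext_iff.mp (h (u, v))).1
    ext ⟨u, v⟩
    · simpa using congrArg (· u) (hfst v)
    · exact hsnd (u, v)
  simpa using distinguishingNumber_le_card_of_isDistinguishingLabeling hlabel

end ConormalProd

theorem stmt7_general {α β : Type*} [Fintype α] [Fintype β]
    (G : SimpleGraph α) (H : SimpleGraph β) :
    distinguishingNumber (conormalProd G H) ≤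
      min (distinguishingNumber G * Fintype.card β)
        (Fintype.card α * distinguishingNumber H) := by
  refine le_min (distinguishingNumber_conormalProd_le_mul_card G H) ?_
  calc distinguishingNumber (conormalProd G H)
      ≤ distinguishingNumber (conormalProd H G) :=
        distinguishingNumber_le_of_iso (conormalProdComm G H)
    _ ≤ distinguishingNumber H * Fintype.card α :=
        distinguishingNumber_conormalProd_le_mul_card H G
    _ = Fintype.card α * distinguishingNumber H := mul_comm _ _

theorem stmt7 {α β : Type*} [Fintype α] [Fintype β]
    (G : SimpleGraph α) (H : SimpleGraph β)
    (hG : G.Connected) (hH : H.Connected) :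
    distinguishingNumber (conormalProd G H) ≤
      min (distinguishingNumber G * Fintype.card β)
        (Fintype.card α * distinguishingNumber H) :=
  stmt7_general G H
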